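/- arXiv:2011.14614 — 7 statements merged into one kernel-verified Lean document; each statement's English description precedes it below -/
import Mathlib

section
/- Let 0 < τ < 1/2 and λ = arccosh(1/(2τ)). Let Υ⁽ⁿ⁾ be the n×n symmetric tridiagonal matrix with 1 on the diagonal and -τ on the sub- and super-diagonals. Define the matrix Σ⁽ⁿ⁾ with entries Σᵢⱼ = (1/τ)·(cosh((n+1-|j-i|)λ) - cosh((n+1-i-j)λ))/(2·sinh(λ)·sinh((n+1)λ)) for 1 ≤ i, j ≤ n. Then Σ⁽ⁿ⁾·Υ⁽ⁿ⁾ is the identity matrix. -/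
/-- The inverse hyperbolic cosine, for arguments `x ≥ 1`. -/
noncomputable def arcosh (x : ℝ) : ℝ := Real.log (x + Real.sqrt (x ^ 2 - 1))

lemma cosh_pair (a b : ℝ) :
    Real.cosh (a + b) + Real.cosh (a - b) = 2 * Real.cosh a * Real.cosh b := by
  rw [Real.cosh_add, Real.cosh_sub]; ring

theorem tridiag_inverse (n : ℕ) (τ l : ℝ) (hτ0 : 0 < τ) (hτ : τ < 1 / 2)
    (hl : l = arcosh (1 / (2 * τ)))
    (Υ S : Matrix (Fin n) (Fin n) ℝ)
    (hΥ : ∀ i j : Fin n, Υ i j =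
      if i = j then 1
      else if ((i : ℤ) - (j : ℤ)).natAbs = 1 then -τ
      else 0)
    (hS : ∀ i j : Fin n, S i j =
      (1 / τ) *
        (Real.cosh (((n : ℝ) + 1 - |((j : ℝ) + 1) - ((i : ℝ) + 1)|) * l) -
          Real.cosh (((n : ℝ) + 1 - ((i : ℝ) + 1) - ((j : ℝ) + 1)) * l)) /
        (2 * Real.sinh l * Real.sinh (((n : ℝ) + 1) * l))) :
    S * Υ = 1 := by
  have hτne : τ ≠ 0 := ne_of_gt hτ0
  set x : ℝ := 1 / (2 * τ) with hxdef
  have hx1 : 1 < x := by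
    rw [hxdef, lt_div_iff₀ (by linarith)]; linarith
  have hs2 : Real.sqrt (x ^ 2 - 1) ^ 2 = x ^ 2 - 1 := by
    rw [sq, Real.mul_self_sqrt]; nlinarith
  have hspos : 0 < Real.sqrt (x ^ 2 - 1) := Real.sqrt_pos.mpr (by nlinarith)
  have hypos : 0 < x + Real.sqrt (x ^ 2 - 1) := by linarith
  have hyinv : (x + Real.sqrt (x ^ 2 - 1))⁻¹ = x - Real.sqrt (x ^ 2 - 1) :=
    inv_eq_of_mul_eq_one_right (by nlinarith)
  have hcosh : Real.cosh l = x := by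
    rw [hl, arcosh, Real.cosh_log hypos, hyinv]; ring
  have hsinh : 0 < Real.sinh l := by
    rw [hl, arcosh, Real.sinh_log hypos, hyinv]; linarith
  have hl0 : 0 < l := Real.sinh_pos_iff.mp hsinh
  have htc : 2 * τ * Real.cosh l = 1 := by
    rw [hcosh, hxdef]; field_simp
  set N : ℝ := (n : ℝ) + 1 with hNdef
  have hNl : 0 < Real.sinh (N * l) :=
    Real.sinh_pos_iff.mpr (by positivity)
  set D : ℝ := 2 * Real.sinh l * Real.sinh (N * l) with hDdef
  have hDpos : 0 < D := by rw [hDdef]; positivity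
  have hD0 : D ≠ 0 := ne_of_gt hDpos
  ext i k
  set c : ℝ := (i : ℝ) + 1 with hcdef
  have hc0 : 0 < c := by rw [hcdef]; positivity
  set P : ℝ → ℝ := fun m =>
    Real.cosh ((N - |m - c|) * l) - Real.cosh ((N - c - m) * l) with hPdef
  set G : ℝ → ℝ := fun m => 1 / τ * P m / D with hGdef
  have hSG : ∀ j : Fin n, S i j = G ((j : ℝ) + 1) := by
    intro j; rw [hS, hGdef, hPdef]
  have hP0 : P 0 = 0 := by
    have habs : |(0 : ℝ) - c| = c := by rw [zero_sub, abs_neg, abs_of_pos hc0]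
    show Real.cosh ((N - |(0:ℝ) - c|) * l) - Real.cosh ((N - c - 0) * l) = 0
    rw [habs, sub_zero, sub_self]
  have hPN : P N = 0 := by
    have hcN : c ≤ N := by
      rw [hcdef, hNdef]
      have : (i : ℝ) ≤ (n : ℝ) := by exact_mod_cast i.isLt.le
      linarith
    have habs : |N - c| = N - c := abs_of_nonneg (by linarith)
    show Real.cosh ((N - |N - c|) * l) - Real.cosh ((N - c - N) * l) = 0
    rw [habs, show N - c - N = -(N - (N - c)) by ring, neg_mul, Real.cosh_neg, sub_self]
  have hG0 : G 0 = 0 := by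
    show 1 / τ * P 0 / D = 0
    rw [hP0, mul_zero, zero_div]
  have hGN : G N = 0 := by
    show 1 / τ * P N / D = 0
    rw [hPN, mul_zero, zero_div]
  have hPrec : ∀ m : ℝ, 1 ≤ |m - c| →
      P (m - 1) + P (m + 1) = 2 * Real.cosh l * P m := by
    intro m hm
    show (Real.cosh ((N - |m - 1 - c|) * l) - Real.cosh ((N - c - (m - 1)) * l)) +
        (Real.cosh ((N - |m + 1 - c|) * l) - Real.cosh ((N - c - (m + 1)) * l)) =
        2 * Real.cosh l *
          (Real.cosh ((N - |m - c|) * l) - Real.cosh ((N - c - m) * l))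
    have e2 := cosh_pair ((N - c - m) * l) l
    rw [show (N - c - (m - 1)) * l = (N - c - m) * l + l by ring,
        show (N - c - (m + 1)) * l = (N - c - m) * l - l by ring]
    rcases abs_cases (m - c) with ⟨he, hge⟩ | ⟨he, hlt⟩
    · have h1 : |m - 1 - c| = m - c - 1 := by
        rw [abs_of_nonneg (by rw [he] at hm; linarith)]; ring
      have h2 : |m + 1 - c| = m - c + 1 := by
        rw [abs_of_nonneg (by rw [he] at hm; linarith)]; ring
      rw [h1, h2, he,
          show (N - (m - c - 1)) * l = (N - (m - c)) * l + l by ring,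
          show (N - (m - c + 1)) * l = (N - (m - c)) * l - l by ring]
      have e1 := cosh_pair ((N - (m - c)) * l) l
      linear_combination e1 - e2
    · have h1 : |m - 1 - c| = -(m - c) + 1 := by
        rw [abs_of_nonpos (by rw [he] at hm; linarith)]; ring
      have h2 : |m + 1 - c| = -(m - c) - 1 := by
        rw [abs_of_nonpos (by rw [he] at hm; linarith)]; ring
      rw [h1, h2, he,
          show (N - (-(m - c) + 1)) * l = (N - (-(m - c))) * l - l by ring,
          show (N - (-(m - c) - 1)) * l = (N - (-(m - c))) * l + l by ring]
      have e1 := cosh_pair ((N - (-(m - c))) * l) l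
      linear_combination e1 - e2
  have hPdiag : P c - τ * (P (c - 1) + P (c + 1)) = τ * D := by
    have h0 : |c - c| = 0 := by simp
    have h1 : |c - 1 - c| = 1 := by rw [show c - 1 - c = -1 by ring]; simp
    have h2 : |c + 1 - c| = 1 := by rw [show c + 1 - c = 1 by ring]; simp
    show (Real.cosh ((N - |c - c|) * l) - Real.cosh ((N - c - c) * l)) -
        τ * ((Real.cosh ((N - |c - 1 - c|) * l) - Real.cosh ((N - c - (c - 1)) * l)) +
          (Real.cosh ((N - |c + 1 - c|) * l) - Real.cosh ((N - c - (c + 1)) * l))) = τ * D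
    rw [h0, h1, h2,
        show (N - c - (c - 1)) * l = (N - c - c) * l + l by ring,
        show (N - c - (c + 1)) * l = (N - c - c) * l - l by ring,
        show (N - (0:ℝ)) * l = N * l by ring, hDdef]
    have e2 := cosh_pair ((N - c - c) * l) l
    have e3 : Real.cosh ((N - 1) * l) =
        Real.cosh (N * l) * Real.cosh l - Real.sinh (N * l) * Real.sinh l := by
      rw [show (N - 1) * l = N * l - l by ring, Real.cosh_sub]
    linear_combination τ * e2 - 2 * τ * e3 +
      (Real.cosh ((N - c - c) * l) - Real.cosh (N * l)) * htc
  rw [Matrix.mul_apply, Matrix.one_apply]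
  have hterm : ∀ j : Fin n, S i j * Υ j k =
      (if j = k then G ((j : ℝ) + 1) else 0) +
      ((if (j : ℕ) + 1 = (k : ℕ) then -(τ * G ((j : ℝ) + 1)) else 0) +
       (if (j : ℕ) = (k : ℕ) + 1 then -(τ * G ((j : ℝ) + 1)) else 0)) := by
    intro j
    rw [hSG, hΥ]
    by_cases hjk : j = k
    · subst hjk
      rw [if_pos rfl, if_pos rfl, if_neg (by omega), if_neg (by omega)]
      ring
    · rw [if_neg hjk, if_neg hjk]
      have hne : (j : ℕ) ≠ (k : ℕ) := fun h => hjk (Fin.ext h)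
      by_cases hd : ((j : ℤ) - (k : ℤ)).natAbs = 1
      · rw [if_pos hd]
        have hcase : (j : ℕ) + 1 = (k : ℕ) ∨ (j : ℕ) = (k : ℕ) + 1 := by omega
        rcases hcase with h | h
        · rw [if_pos h, if_neg (by omega)]; ring
        · rw [if_neg (by omega), if_pos h]; ring
      · rw [if_neg hd, if_neg (by omega), if_neg (by omega)]
        ring
  rw [Finset.sum_congr rfl (fun j _ => hterm j), Finset.sum_add_distrib,
    Finset.sum_add_distrib, Finset.sum_ite_eq' Finset.univ k (fun j => G ((j : ℝ) + 1))]
  have hsum2 : (∑ j : Fin n, if (j : ℕ) + 1 = (k : ℕ) then -(τ * G ((j : ℝ) + 1)) else 0)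
      = -(τ * G ((k : ℕ) : ℝ)) := by
    rcases Nat.eq_zero_or_pos (k : ℕ) with h0 | hpos
    · rw [Finset.sum_eq_zero (fun j _ => if_neg (by omega)), h0]
      simp [hG0]
    · have hkn : (k : ℕ) - 1 < n := by have := k.isLt; omega
      rw [Finset.sum_eq_single (⟨(k : ℕ) - 1, hkn⟩ : Fin n)]
      · rw [if_pos (by simp; omega)]
        have harg : ((((k : ℕ) - 1 : ℕ)) : ℝ) + 1 = ((k : ℕ) : ℝ) := by
          rw [Nat.cast_sub hpos]; push_cast; ring
        simp only [harg]
      · intro b _ hb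
        exact if_neg (fun h => hb (Fin.ext (by simp; omega)))
      · intro h; exact absurd (Finset.mem_univ _) h
  have hsum3 : (∑ j : Fin n, if (j : ℕ) = (k : ℕ) + 1 then -(τ * G ((j : ℝ) + 1)) else 0)
      = -(τ * G (((k : ℕ) : ℝ) + 2)) := by
    by_cases hlt : (k : ℕ) + 1 < n
    · rw [Finset.sum_eq_single (⟨(k : ℕ) + 1, hlt⟩ : Fin n)]
      · rw [if_pos (by simp)]
        have harg : ((((k : ℕ) + 1 : ℕ)) : ℝ) + 1 = ((k : ℕ) : ℝ) + 2 := by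
          push_cast; ring
        simp only [harg]
      · intro b _ hb
        exact if_neg (fun h => hb (Fin.ext (by simpa using h)))
      · intro h; exact absurd (Finset.mem_univ _) h
    · have harg : ((k : ℕ) : ℝ) + 2 = N := by
        have hk1 : (k : ℕ) + 1 = n := by have := k.isLt; omega
        have hc := congrArg (Nat.cast (R := ℝ)) hk1
        push_cast at hc
        rw [hNdef]; linarith
      rw [Finset.sum_eq_zero (fun j _ => if_neg (by have := j.isLt; omega)), harg, hGN]
      ring
  rw [hsum2, hsum3]
  simp only [Finset.mem_univ, if_true]
  by_cases hik : i = k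
  · subst hik
    rw [if_pos rfl]
    have key := hPdiag
    rw [show c - 1 = ((i : ℕ) : ℝ) by rw [hcdef]; ring,
        show c + 1 = ((i : ℕ) : ℝ) + 2 by rw [hcdef]; ring, hcdef] at key
    have ht : 1 / τ * τ = 1 := by field_simp
    have key2 : 1 / τ * P (((i : ℕ) : ℝ) + 1) -
        (P ((i : ℕ) : ℝ) + P (((i : ℕ) : ℝ) + 2)) = D := by
      linear_combination (1 / τ) * key + (P ((i : ℕ) : ℝ) + P (((i : ℕ) : ℝ) + 2) + D) * ht
    have hτG : ∀ q : ℝ, τ * (1 / τ * q / D) = q / D := by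
      intro q; field_simp
    show 1 / τ * P (((i : ℕ) : ℝ) + 1) / D +
        (-(τ * (1 / τ * P ((i : ℕ) : ℝ) / D)) +
         -(τ * (1 / τ * P (((i : ℕ) : ℝ) + 2) / D))) = 1
    rw [hτG, hτG]
    have hD1 : D / D = 1 := div_self hD0
    linear_combination (1 / D) * key2 + hD1
  · rw [if_neg hik]
    have hne : (i : ℕ) ≠ (k : ℕ) := fun h => hik (Fin.ext h)
    have habs : 1 ≤ |((k : ℕ) : ℝ) + 1 - c| := by
      have h1 : 1 ≤ |((k : ℤ)) - ((i : ℤ))| := Int.one_le_abs (by omega)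
      have h2 : ((1 : ℤ) : ℝ) ≤ ((|((k : ℤ)) - ((i : ℤ))| : ℤ) : ℝ) := by
        exact_mod_cast h1
      push_cast at h2
      rw [show ((k : ℕ) : ℝ) + 1 - c = ((k : ℕ) : ℝ) - ((i : ℕ) : ℝ) by rw [hcdef]; ring]
      exact h2
    have hrec := hPrec (((k : ℕ) : ℝ) + 1) habs
    rw [show ((k : ℕ) : ℝ) + 1 - 1 = ((k : ℕ) : ℝ) by ring,
        show ((k : ℕ) : ℝ) + 1 + 1 = ((k : ℕ) : ℝ) + 2 by ring] at hrec
    show 1 / τ * P (((k : ℕ) : ℝ) + 1) / D +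
        (-(τ * (1 / τ * P ((k : ℕ) : ℝ) / D)) +
         -(τ * (1 / τ * P (((k : ℕ) : ℝ) + 2) / D))) = 0
    have hτG : ∀ q : ℝ, τ * (1 / τ * q / D) = q / D := by
      intro q; field_simp
    have hτinv : 1 / τ = 2 * Real.cosh l := by
      rw [div_eq_iff hτne]; linarith [htc]
    rw [hτG, hτG, hτinv]
    linear_combination (-(1 / D)) * hrec
end

section
/- Let λ > 0, n ≥ 1 and integers 1 ≤ i < j ≤ n. Define Ψᵢⱼ⁽ⁿ⁾ = √( sinh((n+1-j)λ)·sinh(iλ) / (sinh((n+1-i)λ)·sinh(jλ)) ). Then 0 < Ψᵢⱼ⁽ⁿ⁾ < e^{-(j-i)λ}. -/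
/-!
Since `sinh x * exp (-x) = (1 - exp (-2x)) / 2` is strictly increasing, `sinh a / sinh b < exp (a - b)`
whenever `a < b` and `0 < b`. The quantity under the square root is the product of two such ratios,
`sinh ((n+1-j)λ) / sinh ((n+1-i)λ)` and `sinh (iλ) / sinh (jλ)`, each lying in `(0, e^{-(j-i)λ})`.
-/

open Real

lemma sinh_mul_exp_neg_eq (x : ℝ) : sinh x * exp (-x) = (1 - exp (-x) ^ 2) / 2 := by
  rw [sinh_eq, exp_neg]
  field_simp

lemma strictMono_sinh_mul_exp_neg : StrictMono fun x => sinh x * exp (-x) := by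
  intro a b hab
  simp only [sinh_mul_exp_neg_eq]
  have hlt : exp (-b) < exp (-a) := exp_lt_exp.2 (neg_lt_neg hab)
  have hsq : exp (-b) ^ 2 < exp (-a) ^ 2 := pow_lt_pow_left₀ hlt (exp_pos _).le two_ne_zero
  linarith

lemma sinh_div_sinh_lt_exp_sub {a b : ℝ} (hb : 0 < b) (hab : a < b) :
    sinh a / sinh b < exp (a - b) := by
  rw [div_lt_iff₀ (sinh_pos_iff.2 hb)]
  have h := mul_lt_mul_of_pos_left (strictMono_sinh_mul_exp_neg hab) (exp_pos a)
  calc sinh a = exp a * (sinh a * exp (-a)) := by rw [mul_left_comm, ← exp_add]; simp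
    _ < exp a * (sinh b * exp (-b)) := h
    _ = exp (a - b) * sinh b := by rw [sub_eq_add_neg, exp_add]; ring

lemma sqrt_mul_lt_of_lt {x y c : ℝ} (hx : 0 ≤ x) (hy : 0 ≤ y) (hxc : x < c) (hyc : y < c) :
    √(x * y) < c := by
  rw [sqrt_lt' (hx.trans_lt hxc), sq]
  exact mul_lt_mul'' hxc hyc hx hy

theorem psi_bounds_general (l : ℝ) (hl : 0 < l) (n i j : ℕ)
    (hi : 1 ≤ i) (hij : i < j) (hj : j ≤ n) :
    0 < Real.sqrt (Real.sinh (((n : ℝ) + 1 - j) * l) * Real.sinh ((i : ℝ) * l) /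
          (Real.sinh (((n : ℝ) + 1 - i) * l) * Real.sinh ((j : ℝ) * l))) ∧
      Real.sqrt (Real.sinh (((n : ℝ) + 1 - j) * l) * Real.sinh ((i : ℝ) * l) /
          (Real.sinh (((n : ℝ) + 1 - i) * l) * Real.sinh ((j : ℝ) * l))) <
        Real.exp (-((j : ℝ) - i) * l) := by
  have hiR : (1 : ℝ) ≤ i := by exact_mod_cast hi
  have hijR : (i : ℝ) < j := by exact_mod_cast hij
  have hjR : (j : ℝ) ≤ n := by exact_mod_cast hj
  have hnj : 0 < ((n : ℝ) + 1 - j) * l := mul_pos (by linarith) hl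
  have hni : ((n : ℝ) + 1 - j) * l < ((n : ℝ) + 1 - i) * l := by gcongr
  have hil : 0 < (i : ℝ) * l := by positivity
  have hjl : (i : ℝ) * l < j * l := by gcongr
  have hpos₁ : 0 < sinh (((n : ℝ) + 1 - j) * l) / sinh (((n : ℝ) + 1 - i) * l) :=
    div_pos (sinh_pos_iff.2 hnj) (sinh_pos_iff.2 (hnj.trans hni))
  have hpos₂ : 0 < sinh ((i : ℝ) * l) / sinh ((j : ℝ) * l) :=
    div_pos (sinh_pos_iff.2 hil) (sinh_pos_iff.2 (hil.trans hjl))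
  have hlt₁ := sinh_div_sinh_lt_exp_sub (hnj.trans hni) hni
  have hlt₂ := sinh_div_sinh_lt_exp_sub (hil.trans hjl) hjl
  rw [show ((n : ℝ) + 1 - j) * l - ((n : ℝ) + 1 - i) * l = -((j : ℝ) - i) * l by ring] at hlt₁
  rw [show (i : ℝ) * l - j * l = -((j : ℝ) - i) * l by ring] at hlt₂
  rw [← div_mul_div_comm]
  exact ⟨sqrt_pos.2 (mul_pos hpos₁ hpos₂),
    sqrt_mul_lt_of_lt hpos₁.le hpos₂.le hlt₁ hlt₂⟩

theorem psi_bounds (l : ℝ) (hl : 0 < l) (n i j : ℕ) (hn : 1 ≤ n)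
    (hi : 1 ≤ i) (hij : i < j) (hj : j ≤ n) :
    0 < Real.sqrt (Real.sinh (((n : ℝ) + 1 - j) * l) * Real.sinh ((i : ℝ) * l) /
          (Real.sinh (((n : ℝ) + 1 - i) * l) * Real.sinh ((j : ℝ) * l))) ∧
      Real.sqrt (Real.sinh (((n : ℝ) + 1 - j) * l) * Real.sinh ((i : ℝ) * l) /
          (Real.sinh (((n : ℝ) + 1 - i) * l) * Real.sinh ((j : ℝ) * l))) <
        Real.exp (-((j : ℝ) - i) * l) :=
  psi_bounds_general l hl n i j hi hij hj
end

section
/- Let λ > 0 and fix integers 1 ≤ i < j. Define Ψᵢⱼ⁽ⁿ⁾ = √( sinh((n+1-j)λ)·sinh(iλ) / (sinh((n+1-i)λ)·sinh(jλ)) ) and Ψᵢⱼ⁽^∞⁾ = e^{-(j-i)λ}·√((1 - e^{-2iλ})/(1 - e^{-2jλ})). Then Ψᵢⱼ⁽ⁿ⁾/Ψᵢⱼ⁽^∞⁾ = 1 - (1/2)(e^{2jλ} - e^{2iλ})·e^{-2(n+1)λ} + o(e^{-2(n+1)λ}) as n → ∞. -/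
/-!
Put `x = e^{-2(n+1)λ}`. Writing `sinh t = e^t (1 - e^{-2t}) / 2`, the ratio
`Ψᵢⱼ⁽ⁿ⁾ / Ψᵢⱼ⁽^∞⁾` is exactly `√((1 - e^{2jλ} x) / (1 - e^{2iλ} x))`, a function of `x` that
is differentiable at `0` with value `1` and derivative `-(e^{2jλ} - e^{2iλ}) / 2`. The
expansion is its first-order Taylor expansion at `0`, evaluated along `x → 0`.
-/

open Real Filter Topology Asymptotics

lemma sqrt_sinh_ratio_div_eq (l N i j : ℝ) (hl : 0 < l) (hi : 0 < i) (hj : 0 < j) :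
    √(sinh ((N - j) * l) * sinh (i * l) / (sinh ((N - i) * l) * sinh (j * l))) /
        (exp (-(j - i) * l) * √((1 - exp (-2 * i * l)) / (1 - exp (-2 * j * l)))) =
      √((1 - exp (2 * j * l) * exp (-2 * N * l)) / (1 - exp (2 * i * l) * exp (-2 * N * l))) := by
  have exp_two_mul_eq_sq (x : ℝ) : exp (2 * x) = exp x ^ 2 := by rw [← exp_nat_mul]; norm_num
  have ha : 1 < exp (i * l) := one_lt_exp_iff.mpr (mul_pos hi hl)
  have hb : 1 < exp (j * l) := one_lt_exp_iff.mpr (mul_pos hj hl)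
  have hc : 0 < exp (N * l) := exp_pos _
  simp only [sub_mul, sinh_eq, neg_mul, exp_neg, exp_sub, mul_assoc, exp_two_mul_eq_sq]
  generalize exp (i * l) = a at *
  generalize exp (j * l) = b at *
  generalize exp (N * l) = c at *
  have hY : 0 < (1 - (a ^ 2)⁻¹) / (1 - (b ^ 2)⁻¹) := by
    have ha2 : (a ^ 2)⁻¹ < 1 := inv_lt_one_of_one_lt₀ (one_lt_pow₀ ha two_ne_zero)
    have hb2 : (b ^ 2)⁻¹ < 1 := inv_lt_one_of_one_lt₀ (one_lt_pow₀ hb two_ne_zero)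
    exact div_pos (sub_pos.mpr ha2) (sub_pos.mpr hb2)
  -- At `c = a` both sides vanish through division by zero, so no hypothesis on `N` is needed.
  have hsq :
      (c / b - (c / b)⁻¹) / 2 * ((a - a⁻¹) / 2) / ((c / a - (c / a)⁻¹) / 2 * ((b - b⁻¹) / 2)) =
      (b / a)⁻¹ ^ 2 * ((1 - (a ^ 2)⁻¹) / (1 - (b ^ 2)⁻¹)) *
        ((1 - b ^ 2 * (c ^ 2)⁻¹) / (1 - a ^ 2 * (c ^ 2)⁻¹)) := by
    field_simp
  rw [hsq, sqrt_mul (by positivity), sqrt_mul (by positivity), sqrt_sq (by positivity)]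
  exact mul_div_cancel_left₀ _ (mul_pos (by positivity) (sqrt_pos.mpr hY)).ne'

lemma hasDerivAt_sqrt_one_sub_mul_div_one_sub_mul (A B : ℝ) :
    HasDerivAt (fun y : ℝ => √((1 - A * y) / (1 - B * y))) (-(A - B) / 2) 0 := by
  have hline (C : ℝ) : HasDerivAt (fun y : ℝ => 1 - C * y) (-C) 0 := by
    simpa using ((hasDerivAt_id (0 : ℝ)).const_mul C).const_sub 1
  have hquot : HasDerivAt (fun y : ℝ => (1 - A * y) / (1 - B * y)) (B - A) 0 :=
    ((hline A).div (hline B) (by norm_num)).congr_deriv (by ring)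
  exact (hquot.sqrt (by norm_num)).congr_deriv (by norm_num)

lemma isLittleO_sqrt_one_sub_mul_div_one_sub_mul (A B : ℝ) :
    (fun y : ℝ => √((1 - A * y) / (1 - B * y)) - (1 - 1 / 2 * (A - B) * y)) =o[𝓝 0] id := by
  have h := hasDerivAt_iff_isLittleO.mp (hasDerivAt_sqrt_one_sub_mul_div_one_sub_mul A B)
  simp only [mul_zero, sub_zero, div_one, sqrt_one, smul_eq_mul] at h
  exact h.congr_left fun y => by ring

theorem psi_ratio_expansion (l : ℝ) (hl : 0 < l) (i j : ℕ) (hi : 1 ≤ i) (hij : i < j) :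
    (fun n : ℕ =>
        Real.sqrt (Real.sinh (((n : ℝ) + 1 - j) * l) * Real.sinh ((i : ℝ) * l) /
            (Real.sinh (((n : ℝ) + 1 - i) * l) * Real.sinh ((j : ℝ) * l))) /
          (Real.exp (-((j : ℝ) - i) * l) *
            Real.sqrt ((1 - Real.exp (-2 * (i : ℝ) * l)) /
              (1 - Real.exp (-2 * (j : ℝ) * l)))) -
        (1 - (1 / 2) * (Real.exp (2 * (j : ℝ) * l) - Real.exp (2 * (i : ℝ) * l)) *
          Real.exp (-2 * ((n : ℝ) + 1) * l)))
      =o[Filter.atTop] (fun n : ℕ => Real.exp (-2 * ((n : ℝ) + 1) * l)) := by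
  have hx : Tendsto (fun n : ℕ => exp (-2 * ((n : ℝ) + 1) * l)) atTop (𝓝 0) :=
    tendsto_exp_atBot.comp <|
      ((tendsto_natCast_atTop_atTop.atTop_add tendsto_const_nhds).const_mul_atTop_of_neg
        (by norm_num)).atBot_mul_const hl
  have hi' : (0 : ℝ) < i := Nat.cast_pos.mpr (by omega)
  have hj' : (0 : ℝ) < j := Nat.cast_pos.mpr (by omega)
  simp only [sqrt_sinh_ratio_div_eq l _ i j hl hi' hj']
  exact (isLittleO_sqrt_one_sub_mul_div_one_sub_mul _ _).comp_tendsto hx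
end

section
/- Let λ > 0 and fix integers i < j. Define Ωᵢⱼ⁽ⁿ⁾ = e^{-(j-i)λ}·√( (1 - e^{-2(n+1-j)λ})·(1 - e^{-2(n+1+i)λ}) / ((1 - e^{-2(n+1-i)λ})·(1 - e^{-2(n+1+j)λ})) ). Then Ωᵢⱼ⁽ⁿ⁾·e^{(j-i)λ} - 1 = -(sinh(2jλ) - sinh(2iλ))·e^{-2(n+1)λ} + o(e^{-2(n+1)λ}) as n → ∞. -/
/-!
Put `x = e^{-2(n+1)λ}`. Each factor `1 - e^{-2(n+1∓k)λ}` equals `1 - x e^{±2kλ}`, so after the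
prefactors `e^{∓(j-i)λ}` cancel, the quantity is `√(Q x) - 1` for a fixed rational function `Q`
with `Q 0 = 1`. Its first-order Taylor expansion at `0` has slope
`(e^{2iλ} + e^{-2jλ} - e^{2jλ} - e^{-2iλ}) / 2 = -(sinh 2jλ - sinh 2iλ)`, and `x → 0`.
-/

open Filter Topology Real Asymptotics

lemma hasDerivAt_one_sub_mul_mul_one_sub_mul (a b : ℝ) :
    HasDerivAt (fun x : ℝ => (1 - x * a) * (1 - x * b)) (-(a + b)) 0 := by
  have hlin : ∀ c : ℝ, HasDerivAt (fun x : ℝ => 1 - x * c) (-c) 0 := fun c => by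
    simpa using ((hasDerivAt_id (0 : ℝ)).mul_const c).const_sub 1
  exact ((hlin a).mul (hlin b)).congr_deriv (by ring)

lemma hasDerivAt_sqrt_ratio (a b c d : ℝ) :
    HasDerivAt (fun x : ℝ => √((1 - x * a) * (1 - x * b) / ((1 - x * c) * (1 - x * d))))
      ((c + d - a - b) / 2) 0 := by
  have hratio := (hasDerivAt_one_sub_mul_mul_one_sub_mul a b).div
    (hasDerivAt_one_sub_mul_mul_one_sub_mul c d) (by norm_num)
  exact (hratio.sqrt (by norm_num)).congr_deriv (by norm_num; ring)

lemma isLittleO_sqrt_ratio_sub_one (a b c d : ℝ) :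
    (fun x : ℝ => √((1 - x * a) * (1 - x * b) / ((1 - x * c) * (1 - x * d))) - 1 -
      (c + d - a - b) / 2 * x) =o[𝓝 0] fun x => x := by
  simpa [mul_comm] using (hasDerivAt_sqrt_ratio a b c d).isLittleO

lemma tendsto_exp_neg_two_mul_succ_mul {l : ℝ} (hl : 0 < l) :
    Tendsto (fun n : ℕ => exp (-2 * ((n : ℝ) + 1) * l)) atTop (𝓝 0) := by
  have hsucc : Tendsto (fun n : ℕ => (n : ℝ) + 1) atTop atTop :=
    tendsto_atTop_add_const_right _ 1 tendsto_natCast_atTop_atTop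
  exact tendsto_exp_atBot.comp
    ((hsucc.const_mul_atTop_of_neg (by norm_num : (-2 : ℝ) < 0)).atBot_mul_const hl)

lemma exp_neg_two_mul_sub_mul (t u l : ℝ) :
    exp (-2 * (t - u) * l) = exp (-2 * t * l) * exp (2 * u * l) := by
  rw [← exp_add]; ring_nf

lemma exp_neg_two_mul_add_mul (t u l : ℝ) :
    exp (-2 * (t + u) * l) = exp (-2 * t * l) * exp (-(2 * u * l)) := by
  rw [← exp_add]; ring_nf

lemma exp_neg_mul_mul_mul_exp_mul (u l s : ℝ) : exp (-u * l) * s * exp (u * l) = s := by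
  rw [mul_right_comm, ← exp_add, neg_mul, neg_add_cancel, exp_zero, one_mul]

theorem omega_relative_error_general (l : ℝ) (hl : 0 < l) (i j : ℤ) :
    (fun n : ℕ =>
        Real.exp (-((j : ℝ) - i) * l) *
            Real.sqrt ((1 - Real.exp (-2 * ((n : ℝ) + 1 - j) * l)) *
                (1 - Real.exp (-2 * ((n : ℝ) + 1 + i) * l)) /
              ((1 - Real.exp (-2 * ((n : ℝ) + 1 - i) * l)) *
                (1 - Real.exp (-2 * ((n : ℝ) + 1 + j) * l)))) *
            Real.exp (((j : ℝ) - i) * l) - 1 -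
          (-(Real.sinh (2 * (j : ℝ) * l) - Real.sinh (2 * (i : ℝ) * l)) *
            Real.exp (-2 * ((n : ℝ) + 1) * l)))
      =o[Filter.atTop] (fun n : ℕ => Real.exp (-2 * ((n : ℝ) + 1) * l)) := by
  refine ((isLittleO_sqrt_ratio_sub_one (exp (2 * j * l)) (exp (-(2 * i * l)))
    (exp (2 * i * l)) (exp (-(2 * j * l)))).comp_tendsto
      (tendsto_exp_neg_two_mul_succ_mul hl)).congr' (Eventually.of_forall fun n => ?_)
    EventuallyEq.rfl
  simp only [Function.comp_apply]
  rw [exp_neg_mul_mul_mul_exp_mul, exp_neg_two_mul_sub_mul _ j, exp_neg_two_mul_sub_mul _ i,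
    exp_neg_two_mul_add_mul _ i, exp_neg_two_mul_add_mul _ j, sinh_eq, sinh_eq]
  ring

theorem omega_relative_error (l : ℝ) (hl : 0 < l) (i j : ℤ) (hij : i < j) :
    (fun n : ℕ =>
        Real.exp (-((j : ℝ) - i) * l) *
            Real.sqrt ((1 - Real.exp (-2 * ((n : ℝ) + 1 - j) * l)) *
                (1 - Real.exp (-2 * ((n : ℝ) + 1 + i) * l)) /
              ((1 - Real.exp (-2 * ((n : ℝ) + 1 - i) * l)) *
                (1 - Real.exp (-2 * ((n : ℝ) + 1 + j) * l)))) *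
            Real.exp (((j : ℝ) - i) * l) - 1 -
          (-(Real.sinh (2 * (j : ℝ) * l) - Real.sinh (2 * (i : ℝ) * l)) *
            Real.exp (-2 * ((n : ℝ) + 1) * l)))
      =o[Filter.atTop] (fun n : ℕ => Real.exp (-2 * ((n : ℝ) + 1) * l)) :=
  omega_relative_error_general l hl i j
end

section
/- Let 0 < τ < 1/2 and k a nonnegative integer. Then the Riemann sums Sₖ⁽ⁿ⁾ = (2π/n)·∑_{j=0}^{n-1} e^{-ijk·2π/n}/(1 - 2τ·cos(2πj/n)) converge, as n → ∞, to 2π·αᵏ/√(1 - 4τ²) with α = (1 - √(1 - 4τ²))/(2τ). -/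
/-!
Let `α = poissonRadius τ`, the root of `τ (1 + α²) = α` in `(-1, 1)`. Then
`(1 + α²)(1 - 2τ cos x) = |1 - α e^{ix}|²`, so `1 / (1 - 2τ cos x)` is `1 / √(1 - 4τ²)` times the
Poisson kernel `∑_{m ∈ ℤ} α^{|m|} e^{imx}`. At the `n`-th roots of unity the frequencies `m ≡ m' (mod n)`
coincide, and the kernel folds into the finite sum `∑_{m<n} (α^m + α^{n-m}) e^{imx} / (1 - α^n)`.
Orthogonality of the characters of `ℤ/n` then makes the Riemann sum exactly
`2π (α^k + α^{n-k}) / (√(1 - 4τ²) (1 - α^n))` for `k < n`, which tends to `2π αᵏ / √(1 - 4τ²)`.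
-/

open Complex Finset Filter Topology

section Field

variable {K : Type*} [Field K]

theorem periodized_poisson_identity (a z : K) {n : ℕ} (hz : z ^ n = 1) :
    (1 - a * z) * (1 - a * z⁻¹) * ∑ m ∈ range n, (a ^ m + a ^ (n - m)) * z ^ m =
      (1 - a ^ 2) * (1 - a ^ n) := by
  rcases n.eq_zero_or_pos with rfl | hn
  · simp
  have hz0 : z ≠ 0 := by rintro rfl; simp [hn.ne'] at hz
  have hsplit : ∑ m ∈ range n, (a ^ m + a ^ (n - m)) * z ^ m =
      ∑ m ∈ range n, (a * z) ^ m + a * ∑ m ∈ range n, z ^ m * a ^ (n - 1 - m) := by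
    rw [mul_sum, ← sum_add_distrib]
    refine sum_congr rfl fun m hm => ?_
    rw [show n - m = n - 1 - m + 1 by grind, pow_succ']
    ring
  have hP : (∑ m ∈ range n, (a * z) ^ m) * (1 - a * z) = 1 - a ^ n := by
    rw [geom_sum_mul_neg, mul_pow, hz, mul_one]
  have hQ : (a * ∑ m ∈ range n, z ^ m * a ^ (n - 1 - m)) * (1 - a * z⁻¹) =
      a * z⁻¹ * (1 - a ^ n) := by
    have h := geom_sum₂_mul z a n
    rw [hz] at h
    rw [← h]
    field_simp
  rw [hsplit]
  linear_combination (1 - a * z⁻¹) * hP + (1 - a * z) * hQ - (1 - a ^ n) * a ^ 2 * mul_inv_cancel₀ hz0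

theorem IsPrimitiveRoot.sum_pow_mul_inv_pow {ζ : K} {n : ℕ} (hζ : IsPrimitiveRoot ζ n)
    {m k : ℕ} (hm : m < n) (hk : k < n) :
    ∑ j ∈ range n, (ζ ^ j) ^ m * (ζ ^ j)⁻¹ ^ k = if m = k then (n : K) else 0 := by
  have hζ0 : ζ ≠ 0 := hζ.ne_zero (by omega)
  set ω := ζ ^ m * (ζ ^ k)⁻¹
  have hω : ∀ j, (ζ ^ j) ^ m * (ζ ^ j)⁻¹ ^ k = ω ^ j := fun j => by
    rw [inv_pow, pow_right_comm, pow_right_comm ζ j k, ← inv_pow, ← mul_pow]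
  simp_rw [hω]
  split_ifs with hmk
  · simp [ω, hmk, hζ0]
  · have hω1 : ω ≠ 1 := fun h => hmk <| hζ.pow_inj hm hk <| by
      simpa [ω, mul_inv_eq_one₀ (pow_ne_zero k hζ0)] using h
    have hωn : ω ^ n = 1 := by
      rw [mul_pow, inv_pow, pow_right_comm, pow_right_comm ζ k, hζ.pow_eq_one, one_pow, one_pow,
        inv_one, mul_one]
    rw [geom_sum_eq hω1, hωn, sub_self, zero_div]

theorem IsPrimitiveRoot.sum_inv_pow_mul_sum_mul_pow {ζ : K} {n k : ℕ} (hζ : IsPrimitiveRoot ζ n)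
    (c : ℕ → K) (hk : k < n) :
    ∑ j ∈ range n, (ζ ^ j)⁻¹ ^ k * ∑ m ∈ range n, c m * (ζ ^ j) ^ m = n * c k := by
  simp_rw [mul_sum]
  rw [sum_comm]
  have : ∀ m ∈ range n, ∑ j ∈ range n, (ζ ^ j)⁻¹ ^ k * (c m * (ζ ^ j) ^ m) =
      c m * if m = k then (n : K) else 0 := fun m hm => by
    rw [← hζ.sum_pow_mul_inv_pow (mem_range.1 hm) hk, mul_sum]
    exact sum_congr rfl fun j _ => by ring
  rw [sum_congr rfl this]
  simp [hk, mul_comm]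

theorem inv_one_sub_mul_add_inv_eq_sum {τ a z : K} {n : ℕ} (hz : z ^ n = 1)
    (hτ : τ * (1 + a ^ 2) = a) (ha : (1 - a ^ 2) * (1 - a ^ n) ≠ 0) :
    (1 - τ * (z + z⁻¹))⁻¹ =
      (1 + a ^ 2) / ((1 - a ^ 2) * (1 - a ^ n)) * ∑ m ∈ range n, (a ^ m + a ^ (n - m)) * z ^ m := by
  have hz0 : z ≠ 0 := by
    rintro rfl
    rcases n.eq_zero_or_pos with rfl | hn
    · simp at ha
    · simp [hn.ne'] at hz
  have hfactor : (1 + a ^ 2) * (1 - τ * (z + z⁻¹)) = (1 - a * z) * (1 - a * z⁻¹) := by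
    linear_combination -(z + z⁻¹) * hτ - a ^ 2 * mul_inv_cancel₀ hz0
  refine inv_eq_of_mul_eq_one_right ?_
  calc (1 - τ * (z + z⁻¹)) * ((1 + a ^ 2) / ((1 - a ^ 2) * (1 - a ^ n)) *
        ∑ m ∈ range n, (a ^ m + a ^ (n - m)) * z ^ m)
      = (1 + a ^ 2) * (1 - τ * (z + z⁻¹)) * (∑ m ∈ range n, (a ^ m + a ^ (n - m)) * z ^ m) /
          ((1 - a ^ 2) * (1 - a ^ n)) := by ring
    _ = 1 := by rw [hfactor, periodized_poisson_identity a z hz, div_self ha]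

end Field

theorem sum_exp_div_one_sub_mul_cos_eq {τ a : ℝ} (hτ : τ * (1 + a ^ 2) = a) (ha : |a| < 1)
    {n k : ℕ} (hk : k < n) :
    ∑ j ∈ range n, exp (-I * j * k * (2 * Real.pi / n)) /
        ((1 - 2 * τ * Real.cos (2 * Real.pi * j / n) : ℝ) : ℂ) =
      n * (((1 + a ^ 2) / ((1 - a ^ 2) * (1 - a ^ n)) * (a ^ k + a ^ (n - k)) : ℝ) : ℂ) := by
  have hn : n ≠ 0 := by omega
  set ζ := exp (2 * Real.pi * I / n)
  have hζ : IsPrimitiveRoot ζ n := isPrimitiveRoot_exp n hn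
  have hden : (1 - (a : ℂ) ^ 2) * (1 - (a : ℂ) ^ n) ≠ 0 := by
    have hsq : a ^ 2 < 1 := (sq_lt_one_iff_abs_lt_one a).2 ha
    have hpow : |a ^ n| < 1 := by rw [abs_pow]; exact pow_lt_one₀ (abs_nonneg a) ha hn
    have : (1 - a ^ 2) * (1 - a ^ n) ≠ 0 :=
      mul_ne_zero (by linarith) (by linarith [(abs_lt.1 hpow).2])
    exact_mod_cast this
  have hterm : ∀ j : ℕ, exp (-I * j * k * (2 * Real.pi / n)) /
      ((1 - 2 * τ * Real.cos (2 * Real.pi * j / n) : ℝ) : ℂ) =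
      (1 + (a : ℂ) ^ 2) / ((1 - (a : ℂ) ^ 2) * (1 - (a : ℂ) ^ n)) *
        ((ζ ^ j)⁻¹ ^ k * ∑ m ∈ range n, ((a : ℂ) ^ m + (a : ℂ) ^ (n - m)) * (ζ ^ j) ^ m) := by
    intro j
    have hexp : exp (-I * j * k * (2 * Real.pi / n)) = (ζ ^ j)⁻¹ ^ k := by
      rw [← exp_nat_mul, ← exp_neg, ← exp_nat_mul]
      ring_nf
    have hcos : ((1 - 2 * τ * Real.cos (2 * Real.pi * j / n) : ℝ) : ℂ) =
        1 - τ * (ζ ^ j + (ζ ^ j)⁻¹) := by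
      rw [← exp_nat_mul, ← exp_neg]
      push_cast
      rw [show (j : ℂ) * (2 * Real.pi * I / n) = 2 * Real.pi * j / n * I by ring, ← neg_mul]
      linear_combination -τ * two_cos (2 * Real.pi * j / n)
    have hzn : (ζ ^ j) ^ n = 1 := by rw [pow_right_comm, hζ.pow_eq_one, one_pow]
    rw [div_eq_mul_inv, hexp, hcos, inv_one_sub_mul_add_inv_eq_sum hzn (by exact_mod_cast hτ) hden]
    ring
  rw [sum_congr rfl fun j _ => hterm j, ← mul_sum, hζ.sum_inv_pow_mul_sum_mul_pow _ hk]
  push_cast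
  ring

noncomputable def poissonRadius (τ : ℝ) : ℝ := (1 - √(1 - 4 * τ ^ 2)) / (2 * τ)

section PoissonRadius

variable {τ : ℝ}

theorem sq_sqrt_one_sub_four_mul_sq (hτ : |τ| ≤ 1 / 2) :
    √(1 - 4 * τ ^ 2) ^ 2 = 1 - 4 * τ ^ 2 :=
  Real.sq_sqrt (by nlinarith [sq_abs τ, abs_nonneg τ])

theorem poissonRadius_eq (hτ : |τ| ≤ 1 / 2) :
    poissonRadius τ = 2 * τ / (1 + √(1 - 4 * τ ^ 2)) := by
  rcases eq_or_ne τ 0 with rfl | hτ0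
  · simp [poissonRadius]
  have hs := sq_sqrt_one_sub_four_mul_sq hτ
  have hs0 : 0 < 1 + √(1 - 4 * τ ^ 2) := by positivity
  rw [poissonRadius, div_eq_div_iff (by positivity) hs0.ne']
  linear_combination -hs

theorem poissonRadius_spec (hτ : |τ| ≤ 1 / 2) :
    τ * (1 + poissonRadius τ ^ 2) = poissonRadius τ := by
  have hs := sq_sqrt_one_sub_four_mul_sq hτ
  have hs0 : 0 < 1 + √(1 - 4 * τ ^ 2) := by positivity
  rw [poissonRadius_eq hτ]
  generalize √(1 - 4 * τ ^ 2) = s at *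
  field_simp
  linear_combination τ * hs

theorem one_sub_poissonRadius_sq (hτ : |τ| ≤ 1 / 2) :
    1 - poissonRadius τ ^ 2 = √(1 - 4 * τ ^ 2) * (1 + poissonRadius τ ^ 2) := by
  have hs := sq_sqrt_one_sub_four_mul_sq hτ
  have hs0 : 0 < 1 + √(1 - 4 * τ ^ 2) := by positivity
  rw [poissonRadius_eq hτ]
  generalize √(1 - 4 * τ ^ 2) = s at *
  field_simp
  linear_combination (-1 - s) * hs

theorem abs_poissonRadius_lt_one (hτ : |τ| < 1 / 2) : |poissonRadius τ| < 1 := by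
  have hs : 0 < √(1 - 4 * τ ^ 2) := Real.sqrt_pos.2 (by nlinarith [sq_abs τ, abs_nonneg τ])
  rw [← sq_lt_one_iff_abs_lt_one]
  nlinarith [one_sub_poissonRadius_sq hτ.le, sq_nonneg (poissonRadius τ)]

end PoissonRadius

theorem tendsto_pow_add_pow_sub_div_one_sub_pow {a : ℝ} (ha : |a| < 1) (k : ℕ) :
    Tendsto (fun n : ℕ => (a ^ k + a ^ (n - k)) / (1 - a ^ n)) atTop (𝓝 (a ^ k)) := by
  have h := tendsto_pow_atTop_nhds_zero_of_abs_lt_one ha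
  have hnum : Tendsto (fun n : ℕ => a ^ k + a ^ (n - k)) atTop (𝓝 (a ^ k + 0)) :=
    tendsto_const_nhds.add (h.comp (tendsto_sub_atTop_nat k))
  have hden : Tendsto (fun n : ℕ => 1 - a ^ n) atTop (𝓝 (1 - 0)) := tendsto_const_nhds.sub h
  have hlim := hnum.div hden (by norm_num)
  rw [add_zero, sub_zero, div_one] at hlim
  exact hlim

theorem riemann_sum_tendsto (τ : ℝ) (hτ0 : 0 < τ) (hτ : τ < 1 / 2) (k : ℕ) :
    Filter.Tendsto
      (fun n : ℕ =>
        ((2 * Real.pi / n : ℝ) : ℂ) * ∑ j ∈ Finset.range n,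
          Complex.exp (-Complex.I * j * k * (2 * Real.pi / n)) /
            ((1 - 2 * τ * Real.cos (2 * Real.pi * j / n) : ℝ) : ℂ))
      Filter.atTop
      (nhds ((2 * Real.pi * ((1 - Real.sqrt (1 - 4 * τ ^ 2)) / (2 * τ)) ^ k /
        Real.sqrt (1 - 4 * τ ^ 2) : ℝ) : ℂ)) := by
  have hτ' : |τ| < 1 / 2 := abs_lt.2 ⟨by linarith, hτ⟩
  have ha := abs_poissonRadius_lt_one hτ'
  have hspec := poissonRadius_spec hτ'.le
  have hsq := one_sub_poissonRadius_sq hτ'.le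
  set a := poissonRadius τ
  have hs : 0 < √(1 - 4 * τ ^ 2) := Real.sqrt_pos.2 (by nlinarith)
  have hlimit : 2 * Real.pi * a ^ k / √(1 - 4 * τ ^ 2) =
      2 * Real.pi * (1 + a ^ 2) / (1 - a ^ 2) * a ^ k := by
    rw [hsq]
    field_simp
  change Tendsto _ atTop (𝓝 ((2 * Real.pi * a ^ k / √(1 - 4 * τ ^ 2) : ℝ) : ℂ))
  rw [hlimit]
  refine ((tendsto_pow_add_pow_sub_div_one_sub_pow ha k).const_mul _).ofReal.congr' ?_
  filter_upwards [eventually_gt_atTop k] with n hn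
  rw [sum_exp_div_one_sub_mul_cos_eq hspec ha hn]
  have : (n : ℂ) ≠ 0 := by exact_mod_cast (by omega : n ≠ 0)
  push_cast
  field_simp
end

section
/- Let 0 < τ < 1/2 and fix a nonnegative integer k. Define qₖ⁽ⁿ⁾ = ∑_{j=0}^{n-1} e^{-ijk·2π/n}/(1 - 2τ·cos(2πj/n)) for n > k. Then the ratio qₖ⁽ⁿ⁾/q₀⁽ⁿ⁾ converges to αᵏ as n → ∞, where α = (1 - √(1 - 4τ²))/(2τ). -/
/-!
Let α be the smaller root of τα² − α + τ = 0, so that τ(1 + α²) = α and |α| < 1. For ζ = e^{ix}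
this factors the denominator: 1 − 2τ cos x = (1 − αζ)(1 − αζ⁻¹)/(1 + α²). When ζ is an n-th root
of unity, folding the Poisson kernel ∑_{m ∈ ℤ} α^|m| ζ^m modulo n gives
(1 − αζ)(1 − αζ⁻¹) ∑_{r<n} (α^r + α^{n−r}) ζ^r = (1 − α²)(1 − αⁿ),
so j ↦ 1/(1 − 2τ cos(2πj/n)) is, up to a factor independent of j, the discrete Fourier series
with coefficients α^r + α^{n−r}. Orthogonality of characters then gives exactly
qₖ⁽ⁿ⁾/q₀⁽ⁿ⁾ = (α^k + α^{n−k})/(1 + αⁿ), which tends to α^k.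
-/

open Finset Filter Topology Complex

section PoissonKernel

variable {R : Type*} [CommRing R] {α ζ : R} {n : ℕ}

lemma sum_range_pow_sub_mul_pow_mul (hζ : ζ ^ n = 1) :
    (∑ r ∈ range n, α ^ (n - r) * ζ ^ r) * (ζ - α) = α * (1 - α ^ n) := by
  have hstep : ∀ r ∈ range n, α ^ (n - r) * ζ ^ r * (ζ - α) =
      α * (α ^ (n - (r + 1)) * ζ ^ (r + 1) - α ^ (n - r) * ζ ^ r) := by
    intro r hr
    obtain ⟨m, rfl⟩ : ∃ m, n = r + 1 + m := ⟨n - (r + 1), by have := mem_range.mp hr; omega⟩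
    rw [show r + 1 + m - r = m + 1 by omega, show r + 1 + m - (r + 1) = m by omega]
    ring
  rw [sum_mul, sum_congr rfl hstep, ← mul_sum, sum_range_sub (fun r => α ^ (n - r) * ζ ^ r)]
  simp [hζ]

theorem one_sub_mul_mul_sub_mul_sum_range_eq (hζ : ζ ^ n = 1) :
    (1 - α * ζ) * (ζ - α) * ∑ r ∈ range n, (α ^ r + α ^ (n - r)) * ζ ^ r
      = ζ * (1 - α ^ 2) * (1 - α ^ n) := by
  have hgeom : (∑ r ∈ range n, (α * ζ) ^ r) * (1 - α * ζ) = 1 - α ^ n := by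
    rw [geom_sum_mul_neg, mul_pow, hζ, mul_one]
  have hreflected := sum_range_pow_sub_mul_pow_mul (α := α) hζ
  simp only [add_mul, sum_add_distrib, ← mul_pow]
  linear_combination (ζ - α) * hgeom + (1 - α * ζ) * hreflected

end PoissonKernel

namespace IsPrimitiveRoot

variable {R : Type*} [CommRing R] [IsDomain R] {ω : R} {n : ℕ}

lemma sum_range_pow_pow_eq_ite (hω : IsPrimitiveRoot ω n) (m : ℕ) :
    ∑ j ∈ range n, (ω ^ m) ^ j = if n ∣ m then (n : R) else 0 := by
  split_ifs with h
  · simp [(hω.pow_eq_one_iff_dvd m).mpr h]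
  · have hne : ω ^ m ≠ 1 := fun h1 => h ((hω.pow_eq_one_iff_dvd m).mp h1)
    have hpow : (ω ^ m) ^ n = 1 := by rw [← pow_mul, mul_comm, pow_mul, hω.pow_eq_one, one_pow]
    have := geom_sum_mul_neg (ω ^ m) n
    rw [hpow, sub_self] at this
    exact (mul_eq_zero.mp this).resolve_right (sub_ne_zero.mpr hne.symm)

lemma sum_range_pow_mul_sum_range {k : ℕ} (hω : IsPrimitiveRoot ω n) (hk : k < n) (a : ℕ → R) :
    ∑ j ∈ range n, (ω ^ j) ^ (n - k) * ∑ r ∈ range n, a r * (ω ^ j) ^ r = n * a k := by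
  have hdvd : ∀ r ∈ range n, n ∣ r + (n - k) ↔ r = k := by
    intro r hr
    have := mem_range.mp hr
    constructor
    · intro h
      have := Nat.eq_of_dvd_of_lt_two_mul (by omega) h (by omega)
      omega
    · rintro rfl
      simp [Nat.add_sub_cancel' hk.le]
  calc ∑ j ∈ range n, (ω ^ j) ^ (n - k) * ∑ r ∈ range n, a r * (ω ^ j) ^ r
      = ∑ r ∈ range n, a r * ∑ j ∈ range n, (ω ^ (r + (n - k))) ^ j := by
        simp only [mul_sum]
        rw [sum_comm]
        exact sum_congr rfl fun r _ => sum_congr rfl fun j _ => by ring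
    _ = ∑ r ∈ range n, if r = k then a r * n else 0 := by
        refine sum_congr rfl fun r hr => ?_
        rw [hω.sum_range_pow_pow_eq_ite, if_congr (hdvd r hr) rfl rfl]
        split_ifs <;> simp
    _ = n * a k := by rw [sum_ite_eq', if_pos (mem_range.mpr hk), mul_comm]

end IsPrimitiveRoot

lemma one_sub_mul_exp_mul_exp_sub {τ α : ℝ} (hτα : τ * (1 + α ^ 2) = α) (x : ℝ) :
    (1 - α * exp (x * I)) * (exp (x * I) - α)
      = exp (x * I) * (1 + α ^ 2) * ((1 - 2 * τ * Real.cos x : ℝ) : ℂ) := by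
  have hcos := two_cos x
  have hinv : exp (x * I) * exp (-x * I) = 1 := by rw [← exp_add]; simp
  have hτα' : (τ : ℂ) * (1 + α ^ 2) = α := by exact_mod_cast hτα
  push_cast [ofReal_cos]
  linear_combination (exp (x * I) * (1 + α ^ 2) * τ) * hcos
    + (exp (x * I) ^ 2 + exp (x * I) * exp (-x * I)) * hτα' + α * hinv

lemma inv_one_sub_two_mul_cos_eq {τ α : ℝ} {n : ℕ} (hτα : τ * (1 + α ^ 2) = α)
    (hα2 : α ^ 2 ≠ 1) (hαn : α ^ n ≠ 1) {x : ℝ} (hx : exp (x * I) ^ n = 1) :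
    ((1 - 2 * τ * Real.cos x : ℝ) : ℂ)⁻¹ = (1 + α ^ 2) / ((1 - α ^ 2) * (1 - α ^ n)) *
      ∑ r ∈ range n, ((α : ℂ) ^ r + (α : ℂ) ^ (n - r)) * exp (x * I) ^ r := by
  have key := one_sub_mul_mul_sub_mul_sum_range_eq (α := (α : ℂ)) hx
  rw [one_sub_mul_exp_mul_exp_sub hτα] at key
  have key' : (1 + (α : ℂ) ^ 2) * ((1 - 2 * τ * Real.cos x : ℝ) : ℂ) *
      ∑ r ∈ range n, ((α : ℂ) ^ r + (α : ℂ) ^ (n - r)) * exp (x * I) ^ r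
      = (1 - α ^ 2) * (1 - α ^ n) := by
    refine mul_left_cancel₀ (exp_ne_zero (x * I)) ?_
    linear_combination key
  have hα2' : (1 : ℂ) - α ^ 2 ≠ 0 := sub_ne_zero.mpr (by exact_mod_cast hα2.symm)
  have hαn' : (1 : ℂ) - α ^ n ≠ 0 := sub_ne_zero.mpr (by exact_mod_cast hαn.symm)
  refine (eq_inv_of_mul_eq_one_left ?_).symm
  field_simp
  linear_combination key'

theorem sum_exp_div_one_sub_two_mul_cos {τ α : ℝ} {n k : ℕ} (hτα : τ * (1 + α ^ 2) = α)
    (hα2 : α ^ 2 ≠ 1) (hαn : α ^ n ≠ 1) (hk : k < n) :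
    ∑ j ∈ range n, exp (-I * j * k * (2 * Real.pi / n)) /
        ((1 - 2 * τ * Real.cos (2 * Real.pi * j / n) : ℝ) : ℂ)
      = (1 + α ^ 2) / ((1 - α ^ 2) * (1 - α ^ n)) * (n * (α ^ k + α ^ (n - k))) := by
  set ω := exp (2 * Real.pi * I / n)
  have hω : IsPrimitiveRoot ω n := isPrimitiveRoot_exp n (by omega)
  have hroot : ∀ j : ℕ, exp ((2 * Real.pi * j / n : ℝ) * I) = ω ^ j := fun j => by
    rw [← exp_nat_mul]; push_cast; ring_nf
  have hchar : ∀ j : ℕ, exp (-I * j * k * (2 * Real.pi / n)) = (ω ^ j) ^ (n - k) := fun j => by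
    have hinv : exp (-I * j * k * (2 * Real.pi / n)) * (ω ^ j) ^ k = 1 := by
      rw [← exp_nat_mul, ← exp_nat_mul, ← exp_add]
      ring_nf
      exact exp_zero
    have hinv' : (ω ^ j) ^ (n - k) * (ω ^ j) ^ k = 1 := by
      rw [← pow_add, Nat.sub_add_cancel hk.le, ← pow_mul, mul_comm, pow_mul, hω.pow_eq_one,
        one_pow]
    exact (eq_inv_of_mul_eq_one_left hinv).trans (eq_inv_of_mul_eq_one_left hinv').symm
  have hterm : ∀ j ∈ range n, exp (-I * j * k * (2 * Real.pi / n)) /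
      ((1 - 2 * τ * Real.cos (2 * Real.pi * j / n) : ℝ) : ℂ)
      = (1 + α ^ 2) / ((1 - α ^ 2) * (1 - α ^ n)) * ((ω ^ j) ^ (n - k) *
        ∑ r ∈ range n, ((α : ℂ) ^ r + (α : ℂ) ^ (n - r)) * (ω ^ j) ^ r) := fun j _ => by
    have hj : exp ((2 * Real.pi * j / n : ℝ) * I) ^ n = 1 := by
      rw [hroot, ← pow_mul, mul_comm, pow_mul, hω.pow_eq_one, one_pow]
    rw [div_eq_mul_inv, inv_one_sub_two_mul_cos_eq hτα hα2 hαn hj, hchar, hroot]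
    ring
  rw [sum_congr rfl hterm, ← mul_sum, hω.sum_range_pow_mul_sum_range hk]

theorem sum_exp_div_div_sum_inv_eq {τ α : ℝ} {n k : ℕ} (hτα : τ * (1 + α ^ 2) = α)
    (hα : |α| < 1) (hk : k < n) :
    (∑ j ∈ range n, exp (-I * j * k * (2 * Real.pi / n)) /
        ((1 - 2 * τ * Real.cos (2 * Real.pi * j / n) : ℝ) : ℂ)) /
      ∑ j ∈ range n, ((1 - 2 * τ * Real.cos (2 * Real.pi * j / n) : ℝ) : ℂ)⁻¹
      = (((α ^ k + α ^ (n - k)) / (1 + α ^ n) : ℝ) : ℂ) := by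
  have hα2 : α ^ 2 ≠ 1 := by
    rw [← sq_abs]; exact (pow_lt_one₀ (abs_nonneg α) hα two_ne_zero).ne
  have hαn : α ^ n ≠ 1 := fun h => by
    have := pow_lt_one₀ (abs_nonneg α) hα (by omega : n ≠ 0)
    rw [← abs_pow, h, abs_one] at this
    exact lt_irrefl _ this
  -- the denominator is the case k = 0
  have hden := sum_exp_div_one_sub_two_mul_cos hτα hα2 hαn (by omega : 0 < n)
  simp only [CharP.cast_eq_zero, mul_zero, zero_mul, exp_zero, one_div, pow_zero,
    Nat.sub_zero] at hden
  have hc : (1 + (α : ℂ) ^ 2) / ((1 - α ^ 2) * (1 - α ^ n)) * n ≠ 0 := by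
    refine mul_ne_zero (div_ne_zero ?_ (mul_ne_zero ?_ ?_)) (by exact_mod_cast (by omega : n ≠ 0))
    · exact_mod_cast (by positivity : 1 + α ^ 2 ≠ 0)
    · exact sub_ne_zero.mpr (by exact_mod_cast hα2.symm)
    · exact sub_ne_zero.mpr (by exact_mod_cast hαn.symm)
  rw [sum_exp_div_one_sub_two_mul_cos hτα hα2 hαn hk, hden, ← mul_assoc, ← mul_assoc,
    mul_div_mul_left _ _ hc]
  push_cast
  rfl

lemma tendsto_pow_add_pow_sub_div_one_add_pow {α : ℝ} (hα : |α| < 1) (k : ℕ) :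
    Tendsto (fun n : ℕ => (α ^ k + α ^ (n - k)) / (1 + α ^ n)) atTop (𝓝 (α ^ k)) := by
  have hpow := tendsto_pow_atTop_nhds_zero_of_abs_lt_one hα
  simpa only [add_zero, div_one, Pi.div_def, Function.comp_apply] using (tendsto_const_nhds.add (hpow.comp (tendsto_sub_atTop_nat k))).div
    (tendsto_const_nhds.add hpow) (by norm_num : (1 : ℝ) + 0 ≠ 0)

lemma abs_one_sub_sqrt_div_two_mul_lt_one {τ : ℝ} (hτ0 : 0 < τ) (hτ : τ < 1 / 2) :
    |(1 - √(1 - 4 * τ ^ 2)) / (2 * τ)| < 1 := by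
  have hs2 : √(1 - 4 * τ ^ 2) ^ 2 = 1 - 4 * τ ^ 2 := Real.sq_sqrt (by nlinarith)
  have hs0 := Real.sqrt_nonneg (1 - 4 * τ ^ 2)
  rw [abs_lt, lt_div_iff₀ (by positivity), div_lt_one (by positivity)]
  constructor <;> nlinarith

lemma mul_one_add_one_sub_sqrt_div_two_mul_sq {τ : ℝ} (hτ0 : 0 < τ) (hτ : τ < 1 / 2) :
    τ * (1 + ((1 - √(1 - 4 * τ ^ 2)) / (2 * τ)) ^ 2) = (1 - √(1 - 4 * τ ^ 2)) / (2 * τ) := by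
  have hs2 : √(1 - 4 * τ ^ 2) ^ 2 = 1 - 4 * τ ^ 2 := Real.sq_sqrt (by nlinarith)
  set s := √(1 - 4 * τ ^ 2)
  field_simp
  linear_combination hs2

theorem circulant_correlation_tendsto (τ : ℝ) (hτ0 : 0 < τ) (hτ : τ < 1 / 2) (k : ℕ) :
    Filter.Tendsto
      (fun n : ℕ =>
        (∑ j ∈ Finset.range n,
            Complex.exp (-Complex.I * j * k * (2 * Real.pi / n)) /
              ((1 - 2 * τ * Real.cos (2 * Real.pi * j / n) : ℝ) : ℂ)) /
          ∑ j ∈ Finset.range n,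
            ((1 - 2 * τ * Real.cos (2 * Real.pi * j / n) : ℝ) : ℂ)⁻¹)
      Filter.atTop
      (nhds ((((1 - Real.sqrt (1 - 4 * τ ^ 2)) / (2 * τ)) ^ k : ℝ) : ℂ)) := by
  have hα := abs_one_sub_sqrt_div_two_mul_lt_one hτ0 hτ
  have hτα := mul_one_add_one_sub_sqrt_div_two_mul_sq hτ0 hτ
  refine ((continuous_ofReal.tendsto _).comp
    (tendsto_pow_add_pow_sub_div_one_add_pow hα k)).congr' ?_
  filter_upwards [eventually_gt_atTop k] with n hn
  exact (sum_exp_div_div_sum_inv_eq hτα hα hn).symm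
end

section
/- Let λ > 0, n ≥ 1, 0 < τ < 1/2 with λ = arccosh(1/(2τ)), and let Σ⁽ⁿ⁾ be the inverse of the n×n tridiagonal matrix with 1 on the diagonal and -τ off-diagonal. Then the diagonal entries satisfy Σᵢᵢ⁽ⁿ⁾ = (1/τ)·sinh((n+1-i)λ)·sinh(iλ)/(sinh(λ)·sinh((n+1)λ)) for 1 ≤ i ≤ n, and in particular Σᵢᵢ⁽ⁿ⁾ > 0. -/
/-!
The inverse is the discrete Green's function
`G a b = sinh ((n + 1 - max a b) λ) sinh (min a b λ) / (τ sinh λ sinh ((n + 1) λ))`.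
Because `2 τ cosh λ = 1`, the columns of `G` solve the recurrence `u (a - 1) + u (a + 1) = 2 cosh λ u a`
of `Υ` away from the diagonal (`sinh` solves it), they vanish at the ghost indices `a = 0` and
`a = n + 1`, and the addition formula for `sinh` shows that on the diagonal the defect is exactly
`sinh λ sinh ((n + 1) λ)`, which the normalisation turns into `1`. So `Υ G = 1`, and the diagonal
entries of `G` are products of `sinh` of positive arguments.
-/

open Matrix

section Tridiag

variable {R : Type*} [Semiring R]

def tridiag (n : ℕ) (d e : R) : Matrix (Fin n) (Fin n) R :=
  Matrix.of fun i j => if i = j then d else if ((i : ℤ) - (j : ℤ)).natAbs = 1 then e else 0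

theorem tridiag_apply_eq_add (n : ℕ) (d e : R) (i k : Fin n) :
    tridiag n d e i k =
      (if (k : ℕ) = i then d else 0) + (if (k : ℕ) + 1 = i then e else 0) +
        (if (k : ℕ) = i + 1 then e else 0) := by
  simp only [tridiag, Matrix.of_apply, Fin.ext_iff]
  split_ifs <;> first | omega | simp

/-- The padding `u 0 = u (n + 1) = 0` lets the first and last rows follow the same three-term rule
as the others. -/
theorem tridiag_mulVec_apply (n : ℕ) (d e : R) (u : ℕ → R) (h0 : u 0 = 0)
    (hn : u (n + 1) = 0) (i : Fin n) :
    (tridiag n d e *ᵥ fun k => u (k + 1)) i = d * u (i + 1) + e * (u i + u (i + 2)) := by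
  simp only [mulVec, dotProduct, tridiag_apply_eq_add, add_mul, ite_mul, zero_mul,
    Finset.sum_add_distrib]
  rw [Fin.sum_univ_eq_sum_range (fun k => if k = i then d * u (k + 1) else 0),
    Fin.sum_univ_eq_sum_range (fun k => if k + 1 = i then e * u (k + 1) else 0),
    Fin.sum_univ_eq_sum_range (fun k => if k = i + 1 then e * u (k + 1) else 0)]
  have below : ∑ k ∈ Finset.range n, (if k + 1 = i then e * u (k + 1) else 0) = e * u i := by
    have shift := Finset.sum_range_succ' (fun k => if k = (i : ℕ) then e * u k else 0) n
    rw [Finset.sum_ite_eq', if_pos (by simp)] at shift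
    simp only [shift, h0, mul_zero, ite_self, add_zero]
  have above :
      ∑ k ∈ Finset.range n, (if k = i + 1 then e * u (k + 1) else 0) = e * u (i + 2) := by
    rw [Finset.sum_ite_eq']
    split_ifs with h
    · rfl
    · rw [show (i : ℕ) + 2 = n + 1 by simp at h; omega, hn, mul_zero]
  rw [Finset.sum_ite_eq', if_pos (Finset.mem_range.2 i.isLt), below, above, add_assoc, mul_add]

end Tridiag

section Green

open Real

theorem sinh_sub_add_sinh_add (x y : ℝ) : sinh (x - y) + sinh (x + y) = 2 * cosh y * sinh x := by
  rw [sinh_sub, sinh_add]; ring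

theorem sinh_mul_sinh_sub_add_sinh_sub_mul_sinh (x y z : ℝ) :
    sinh x * sinh (y - z) + sinh (x - z) * sinh y =
      2 * cosh z * sinh x * sinh y - sinh z * sinh (x + y) := by
  rw [sinh_sub, sinh_sub, sinh_add]; ring

/-- Unnormalised Green's function in the paper's `1`-based indices; `i : Fin n` is index `i + 1`. -/
noncomputable def green (n : ℕ) (l : ℝ) (a b : ℕ) : ℝ :=
  sinh (((n : ℝ) + 1 - (max a b : ℕ)) * l) * sinh ((min a b : ℕ) * l)

theorem green_zero_left (n : ℕ) (l : ℝ) (b : ℕ) : green n l 0 b = 0 := by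
  simp [green]

theorem green_succ_left (n : ℕ) (l : ℝ) {b : ℕ} (hb : b ≤ n + 1) : green n l (n + 1) b = 0 := by
  simp [green, max_eq_left hb]

theorem green_recurrence (n : ℕ) (l : ℝ) (a b : ℕ) :
    green n l a b + green n l (a + 2) b =
      2 * cosh l * green n l (a + 1) b - if a + 1 = b then sinh l * sinh ((n + 1) * l) else 0 := by
  rcases lt_trichotomy (a + 1) b with hlt | rfl | hgt
  · rw [if_neg hlt.ne]
    simp only [green, max_eq_right (by omega : a ≤ b), max_eq_right (by omega : a + 2 ≤ b),
      max_eq_right hlt.le, min_eq_left (by omega : a ≤ b), min_eq_left (by omega : a + 2 ≤ b),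
      min_eq_left hlt.le]
    push_cast
    have h := sinh_sub_add_sinh_add ((a + 1) * l) l
    rw [show ((a : ℝ) + 1) * l - l = a * l by ring,
      show ((a : ℝ) + 1) * l + l = (a + 2) * l by ring] at h
    linear_combination sinh (((n : ℝ) + 1 - b) * l) * h
  · rw [if_pos rfl]
    simp only [green, max_eq_right (by omega : a ≤ a + 1), max_eq_left (by omega : a + 1 ≤ a + 2),
      max_self, min_eq_left (by omega : a ≤ a + 1), min_eq_right (by omega : a + 1 ≤ a + 2),
      min_self]
    push_cast
    have h := sinh_mul_sinh_sub_add_sinh_sub_mul_sinh ((n + 1 - (a + 1)) * l) ((a + 1) * l) l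
    rw [show ((a : ℝ) + 1) * l - l = a * l by ring,
      show ((n : ℝ) + 1 - (a + 1)) * l - l = (n + 1 - (a + 2)) * l by ring,
      show ((n : ℝ) + 1 - (a + 1)) * l + (a + 1) * l = (n + 1) * l by ring] at h
    linear_combination h
  · rw [if_neg hgt.ne']
    simp only [green, max_eq_left (by omega : b ≤ a), max_eq_left (by omega : b ≤ a + 2),
      max_eq_left hgt.le, min_eq_right (by omega : b ≤ a), min_eq_right (by omega : b ≤ a + 2),
      min_eq_right hgt.le]
    push_cast
    have h := sinh_sub_add_sinh_add ((n + 1 - (a + 1)) * l) l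
    rw [show ((n : ℝ) + 1 - (a + 1)) * l - l = (n + 1 - (a + 2)) * l by ring,
      show ((n : ℝ) + 1 - (a + 1)) * l + l = (n + 1 - a) * l by ring] at h
    linear_combination sinh (b * l) * h

theorem green_self_pos (n : ℕ) {l : ℝ} (hl : 0 < l) {a : ℕ} (ha : 0 < a) (han : a ≤ n) :
    0 < green n l a a := by
  simp only [green, max_self, min_self]
  have han' : (a : ℝ) ≤ n := by exact_mod_cast han
  exact mul_pos (sinh_pos_iff.2 (by nlinarith)) (sinh_pos_iff.2 (by positivity))

noncomputable def greenMatrix (n : ℕ) (τ l : ℝ) : Matrix (Fin n) (Fin n) ℝ :=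
  Matrix.of fun i j => green n l (i + 1) (j + 1) / (τ * sinh l * sinh ((n + 1) * l))

theorem tridiag_mul_greenMatrix (n : ℕ) {τ l : ℝ} (hτ : τ ≠ 0) (hl : l ≠ 0)
    (hcosh : 2 * τ * cosh l = 1) : tridiag n 1 (-τ) * greenMatrix n τ l = 1 := by
  have hD : τ * sinh l * sinh ((n + 1) * l) ≠ 0 := by
    have : ((n : ℝ) + 1) * l ≠ 0 := mul_ne_zero (by positivity) hl
    simp [hτ, hl, this]
  ext i j
  set u : ℕ → ℝ := fun a => green n l a (j + 1) / (τ * sinh l * sinh ((n + 1) * l))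
  change (tridiag n 1 (-τ) *ᵥ fun k => u (k + 1)) i = _
  rw [tridiag_mulVec_apply n 1 (-τ) u (by simp [u, green_zero_left])
    (by simp [u, green_succ_left n l (show (j : ℕ) + 1 ≤ n + 1 by omega)])]
  have hrec := green_recurrence n l i (j + 1)
  simp only [u, one_apply, Fin.ext_iff, add_left_inj] at hrec ⊢
  field_simp
  split_ifs at hrec ⊢ <;> linear_combination (-τ) * hrec - green n l (i + 1) (j + 1) * hcosh

end Green

theorem tridiag_inverse_diagonal_general (n : ℕ) (τ l : ℝ)
    (hτ0 : 0 < τ) (hτ : τ < 1 / 2) (hl0 : 0 < l)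
    (hl : l = arcosh (1 / (2 * τ)))
    (Υ : Matrix (Fin n) (Fin n) ℝ)
    (hΥ : ∀ i j : Fin n, Υ i j =
      if i = j then 1
      else if ((i : ℤ) - (j : ℤ)).natAbs = 1 then -τ
      else 0) :
    ∀ i : Fin n,
      Υ⁻¹ i i =
        (1 / τ) * (Real.sinh (((n : ℝ) + 1 - ((i : ℝ) + 1)) * l) *
            Real.sinh (((i : ℝ) + 1) * l)) /
          (Real.sinh l * Real.sinh (((n : ℝ) + 1) * l)) ∧
      0 < Υ⁻¹ i i := by
  have hcosh : 2 * τ * Real.cosh l = 1 := by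
    have h1 : 1 ≤ 1 / (2 * τ) := by rw [le_div_iff₀ (by positivity)]; linarith
    -- `arcosh` is definitionally `Real.arcosh`
    rw [hl, show Real.cosh (arcosh _) = _ from Real.cosh_arcosh h1]
    field_simp
  have hinv : Υ⁻¹ = greenMatrix n τ l := by
    rw [show Υ = tridiag n 1 (-τ) from Matrix.ext hΥ]
    exact inv_eq_right_inv (tridiag_mul_greenMatrix n hτ0.ne' hl0.ne' hcosh)
  intro i
  have hpos := green_self_pos n hl0 (Nat.succ_pos i) i.isLt
  rw [hinv, greenMatrix, of_apply]
  refine ⟨?_, by positivity⟩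
  simp only [green, max_self, min_self]
  push_cast
  ring

theorem tridiag_inverse_diagonal (n : ℕ) (hn : 1 ≤ n) (τ l : ℝ)
    (hτ0 : 0 < τ) (hτ : τ < 1 / 2) (hl0 : 0 < l)
    (hl : l = arcosh (1 / (2 * τ)))
    (Υ : Matrix (Fin n) (Fin n) ℝ)
    (hΥ : ∀ i j : Fin n, Υ i j =
      if i = j then 1
      else if ((i : ℤ) - (j : ℤ)).natAbs = 1 then -τ
      else 0) :
    ∀ i : Fin n,
      Υ⁻¹ i i =
        (1 / τ) * (Real.sinh (((n : ℝ) + 1 - ((i : ℝ) + 1)) * l) *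
            Real.sinh (((i : ℝ) + 1) * l)) /
          (Real.sinh l * Real.sinh (((n : ℝ) + 1) * l)) ∧
      0 < Υ⁻¹ i i :=
  tridiag_inverse_diagonal_general n τ l hτ0 hτ hl0 hl Υ hΥ
end
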